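/- Let Φ be a crystallographic root system with Hessenberg set 𝔥 ⊆ Φ⁺, and suppose v covers w in Bruhat order. Then |N_v| − |Φ⁺ \ 𝔥| ≤ |N_v^𝔥| ≤ |N_w^𝔥| + 1. -/

import Mathlib

open scoped RealInnerProductSpace Pointwise

noncomputable section

/-- Euclidean `n`-space, the ambient space of the root system. -/
abbrev EV (n : ℕ) := EuclideanSpace ℝ (Fin n)

/-- The (orthogonal) reflection in the hyperplane orthogonal to `α`. -/
def sRefl {n : ℕ} (α : EV n) : EV n ≃ₗᵢ[ℝ] EV n :=
  Submodule.reflection ((ℝ ∙ α)ᗮ)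

/-- A finite crystallographic root system in `ℝⁿ`, together with a choice of
positive roots and a base of simple roots. -/
structure BasedRootSystem (n : ℕ) where
  /-- the set of roots -/
  Φ : Set (EV n)
  /-- the positive roots -/
  pos : Set (EV n)
  /-- the base of simple roots -/
  Δ : Set (EV n)
  finite : Φ.Finite
  nonzero : ∀ α ∈ Φ, α ≠ 0
  reduced : ∀ α ∈ Φ, ∀ c : ℝ, c • α ∈ Φ → c = 1 ∨ c = -1
  reflect_mem : ∀ α ∈ Φ, ∀ β ∈ Φ, sRefl α β ∈ Φ
  cartan_int : ∀ α ∈ Φ, ∀ β ∈ Φ, ∃ m : ℤ, (m : ℝ) = 2 * ⟪α, β⟫ / ⟪α, α⟫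
  pos_sub : pos ⊆ Φ
  pos_union : Φ = pos ∪ (-pos)
  pos_disj : pos ∩ (-pos) = ∅
  Δ_sub : Δ ⊆ pos
  Δ_indep : LinearIndependent ℝ ((↑) : Δ → EV n)
  Δ_span : Submodule.span ℝ Δ = ⊤
  pos_combo : ∀ α ∈ pos, α ∈ AddSubmonoid.closure Δ

namespace BasedRootSystem

variable {n : ℕ} (R : BasedRootSystem n)

/-- The root order: `α ≺ β` iff `β - α` is a nonempty sum of positive roots. -/
def prec (a b : EV n) : Prop :=
  a ≠ b ∧ b - a ∈ AddSubmonoid.closure R.pos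

/-- An ideal of the positive roots: upward closed for the root order. -/
def IsIdeal (I : Set (EV n)) : Prop :=
  I ⊆ R.pos ∧ ∀ β ∈ I, ∀ α ∈ R.pos, R.prec β α → α ∈ I

/-- A Hessenberg set: the complement in `Φ⁺` of an ideal. -/
def IsHess (h : Set (EV n)) : Prop :=
  h ⊆ R.pos ∧ R.IsIdeal (R.pos \ h)

/-- The Weyl group, generated by the reflections in the roots. -/
def Weyl : Subgroup (EV n ≃ₗᵢ[ℝ] EV n) :=
  Subgroup.closure {g | ∃ α ∈ R.Φ, g = sRefl α}

/-- Application of a Weyl group element to a vector. -/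
def ap (w : R.Weyl) (x : EV n) : EV n := (w : EV n ≃ₗᵢ[ℝ] EV n) x

/-- The inversion set `N_w = {α ∈ Φ⁺ : w⁻¹ α ∈ Φ⁻}`. -/
def N (w : R.Weyl) : Set (EV n) := {α | α ∈ R.pos ∧ R.ap w⁻¹ α ∈ -R.pos}

/-- The length of a Weyl group element, `ℓ(w) = |N_w|`. -/
def len (w : R.Weyl) : ℕ := (R.N w).ncard

/-- The `𝔥`-inversion set `N_w^𝔥 = {α ∈ Φ⁺ : w⁻¹ α ∈ -𝔥}`. -/
def Nh (h : Set (EV n)) (w : R.Weyl) : Set (EV n) :=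
  {α | α ∈ R.pos ∧ R.ap w⁻¹ α ∈ -h}

/-- `ℓ_𝔥(w) = |N_w^𝔥|`, the number of Hessenberg edges ending at `w`. -/
def lenh (h : Set (EV n)) (w : R.Weyl) : ℕ := (R.Nh h w).ncard

/-- `v` covers `w` in Bruhat order: `v = s_α w` with `ℓ(v) = ℓ(w) + 1`. -/
def Covers (v w : R.Weyl) : Prop :=
  ∃ α ∈ R.pos, (v : EV n ≃ₗᵢ[ℝ] EV n) = sRefl α * (w : EV n ≃ₗᵢ[ℝ] EV n) ∧
    R.len v = R.len w + 1

/-- Bruhat order: the transitive closure of the relations `w < s_α w`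
whenever the length increases. -/
def bruhatLt (w v : R.Weyl) : Prop :=
  Relation.TransGen (fun u u' : R.Weyl =>
    ∃ α ∈ R.pos, (u' : EV n ≃ₗᵢ[ℝ] EV n) = sRefl α * (u : EV n ≃ₗᵢ[ℝ] EV n) ∧
      R.len u < R.len u') w v

/-- The edge relation of the Hessenberg graph `Γ_𝔥`: `u → w` when `w = s_α u`
with `α ∈ Φ⁺` and `w⁻¹ α ∈ -𝔥`. -/
def Edge (h : Set (EV n)) (u w : R.Weyl) : Prop :=
  ∃ α ∈ R.pos, (w : EV n ≃ₗᵢ[ℝ] EV n) = sRefl α * (u : EV n ≃ₗᵢ[ℝ] EV n) ∧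
    R.ap w⁻¹ α ∈ -h

/-- The flow-up (reachability) order of the Hessenberg graph. -/
def flowLe (h : Set (EV n)) (x y : R.Weyl) : Prop :=
  Relation.ReflTransGen (R.Edge h) x y

/-- The strict flow-up order. -/
def flowLt (h : Set (EV n)) (x y : R.Weyl) : Prop :=
  Relation.TransGen (R.Edge h) x y

/-- The linear polynomial in `ℝ[Δ] = ℝ[x₁,…,xₙ]` corresponding to a vector. -/
def lin (α : EV n) : MvPolynomial (Fin n) ℝ :=
  ∑ i, MvPolynomial.C (α i) * MvPolynomial.X i

/-- The action of an isometry `w` on the polynomial ring, induced by the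
linear action on the ambient space: it sends `lin α` to `lin (w α)`. -/
def polyAct (w : EV n ≃ₗᵢ[ℝ] EV n) :
    MvPolynomial (Fin n) ℝ →ₐ[ℝ] MvPolynomial (Fin n) ℝ :=
  MvPolynomial.aeval fun i => lin (w (EuclideanSpace.single i 1))

/-- The dot action of the Weyl group on `Maps(W, ℝ[Δ])`:
`(w · P)(u) = w (P (w⁻¹ u))`. -/
def dot (w : R.Weyl) (P : R.Weyl → MvPolynomial (Fin n) ℝ) :
    R.Weyl → MvPolynomial (Fin n) ℝ :=
  fun u => polyAct (w : EV n ≃ₗᵢ[ℝ] EV n) (P (w⁻¹ * u))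

/-- Membership in the GKM ring `H_T^*(𝔥)`: the GKM conditions
`P(w) - P(s_α w) ∈ ⟨α⟩` along all edges of `Γ_𝔥`. -/
def GKM (h : Set (EV n)) (P : R.Weyl → MvPolynomial (Fin n) ℝ) : Prop :=
  ∀ u w : R.Weyl, ∀ α ∈ R.pos,
    (w : EV n ≃ₗᵢ[ℝ] EV n) = sRefl α * (u : EV n ≃ₗᵢ[ℝ] EV n) →
    R.ap w⁻¹ α ∈ -h → P w - P u ∈ Ideal.span {lin α}

/-- The product `∏_{α ∈ S} α` (over `S ∩ Φ`) as an element of `ℝ[Δ]`. -/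
def prodRoots (S : Set (EV n)) : MvPolynomial (Fin n) ℝ :=
  ∏ α ∈ (R.finite.inter_of_right S).toFinset, lin α

/-- A flow-up class at `x`: homogeneous of degree `ℓ_𝔥(x)`, with
`P(x) = ∏_{α ∈ N_x^𝔥} α`, supported on the flow-up of `x`, and satisfying the
GKM conditions. -/
def IsFlowUp (h : Set (EV n)) (x : R.Weyl)
    (P : R.Weyl → MvPolynomial (Fin n) ℝ) : Prop :=
  R.GKM h P ∧ (∀ y, (P y).IsHomogeneous (R.lenh h x)) ∧
    P x = R.prodRoots (R.Nh h x) ∧ ∀ y, P y ≠ 0 → R.flowLe h x y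

/-- Irreducibility: the roots admit no splitting into two nonempty mutually
orthogonal parts. -/
def IsIrreducible : Prop :=
  ∀ Ψ Ψ' : Set (EV n), Ψ ∪ Ψ' = R.Φ → (∀ a ∈ Ψ, ∀ b ∈ Ψ', ⟪a, b⟫ = 0) →
    Ψ = ∅ ∨ Ψ' = ∅

/-- `γ` is the highest root: `α ⪯ γ` for every root `α`. -/
def IsHighest (γ : EV n) : Prop :=
  γ ∈ R.pos ∧ ∀ α ∈ R.Φ, α = γ ∨ R.prec α γ

end BasedRootSystem

/-! The first bound holds for every `v`: the inversions of `v` outside `N_v^𝔥` are sent by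
`μ ↦ -v⁻¹ μ` injectively into `Φ⁺ \ 𝔥`.

For the second, let `A = N_{s_α}` be the positive roots made negative by `s_α`. Off `A`,
`s_α` matches `N_v^𝔥 \ A` bijectively with `N_w^𝔥 \ A`. On `A`, the involution
`σ μ = -s_α μ` satisfies `μ + σ μ ∈ ℤ_{>0} α` and matches `N_v ∩ A` with `A \ N_w`, so
`ℓ(v) - ℓ(w) = |A \ N_w| - |A ∩ N_w|`. If `w⁻¹ α > 0`, then `σ` maps `A ∩ N_w` injectively
into `(A \ N_w) \ {α}`; applying this to `v` when `w⁻¹ α < 0` shows that `ℓ(v) = ℓ(w) + 1`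
forces `w⁻¹ α > 0` and `σ (A ∩ N_w) = (A \ N_w) \ {α}`. Hence every `μ ≠ α` in
`N_v^𝔥 ∩ A` lies in `N_w`, and `-w⁻¹ μ ≺ w⁻¹ (σ μ) ∈ 𝔥`, so `-w⁻¹ μ ∈ 𝔥` because `Φ⁺ \ 𝔥`
is an ideal: `μ ∈ N_w^𝔥`. -/

section Reflection

variable {n : ℕ}

theorem sRefl_apply (α x : EV n) : sRefl α x = x - (2 * ⟪α, x⟫ / ⟪α, α⟫) • α := by
  rw [sRefl, Submodule.reflection_orthogonal_apply, Submodule.reflection_singleton_apply,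
    real_inner_self_eq_norm_sq]
  simp only [RCLike.ofReal_real_eq_id, id_eq, two_smul]
  module

theorem sRefl_self (α : EV n) : sRefl α α = -α :=
  Submodule.reflection_orthogonalComplement_singleton_eq_neg α

theorem sRefl_involutive (α : EV n) : Function.Involutive (sRefl α) :=
  Submodule.reflection_involutive _

theorem neg_sRefl_involutive (α : EV n) : Function.Involutive fun x => -sRefl α x := fun x => by
  simp only [map_neg, sRefl_involutive α x, neg_neg]

theorem sRefl_mul_self (α : EV n) : sRefl α * sRefl α = 1 :=
  LinearIsometryEquiv.ext (sRefl_involutive α)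

end Reflection

namespace BasedRootSystem

variable {n : ℕ} (R : BasedRootSystem n)

theorem pos_finite : R.pos.Finite := R.finite.subset R.pos_sub

theorem pos_ne_zero {a : EV n} (ha : a ∈ R.pos) : a ≠ 0 := R.nonzero a (R.pos_sub ha)

theorem mem_pos_or_mem_neg_pos {a : EV n} (ha : a ∈ R.Φ) : a ∈ R.pos ∨ a ∈ -R.pos := by
  rwa [R.pos_union] at ha

theorem notMem_neg_pos {a : EV n} (ha : a ∈ R.pos) : a ∉ -R.pos := fun ha' =>
  Set.eq_empty_iff_forall_notMem.1 R.pos_disj a ⟨ha, ha'⟩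

theorem mem_pos_of_notMem_neg_pos {a : EV n} (ha : a ∈ R.Φ) (ha' : a ∉ -R.pos) : a ∈ R.pos :=
  (R.mem_pos_or_mem_neg_pos ha).resolve_right ha'

theorem mem_Φ_iff_of_mem_Weyl {g : EV n ≃ₗᵢ[ℝ] EV n} (hg : g ∈ R.Weyl) (b : EV n) :
    g b ∈ R.Φ ↔ b ∈ R.Φ := by
  induction hg using Subgroup.closure_induction generalizing b with
  | mem g hg =>
    obtain ⟨α, hα, rfl⟩ := hg
    refine ⟨fun hb => ?_, R.reflect_mem α hα b⟩
    simpa only [sRefl_involutive α b] using R.reflect_mem α hα _ hb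
  | one => rfl
  | mul x y _ _ ihx ihy => rw [LinearIsometryEquiv.coe_mul, Function.comp_apply, ihx, ihy]
  | inv x _ ih => rw [← ih, LinearIsometryEquiv.coe_inv, LinearIsometryEquiv.apply_symm_apply]

theorem ap_mem_Φ (u : R.Weyl) {a : EV n} (ha : a ∈ R.Φ) : R.ap u a ∈ R.Φ :=
  (R.mem_Φ_iff_of_mem_Weyl u.2 a).2 ha

theorem ap_neg (u : R.Weyl) (x : EV n) : R.ap u (-x) = -R.ap u x := map_neg _ x

theorem ap_add (u : R.Weyl) (x y : EV n) : R.ap u (x + y) = R.ap u x + R.ap u y := map_add _ x y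

theorem ap_nsmul (u : R.Weyl) (m : ℕ) (x : EV n) : R.ap u (m • x) = m • R.ap u x :=
  map_nsmul _ m x

theorem ap_inv_of_eq_sRefl_mul {α : EV n} {v w : R.Weyl}
    (hvw : (v : EV n ≃ₗᵢ[ℝ] EV n) = sRefl α * (w : EV n ≃ₗᵢ[ℝ] EV n)) (b : EV n) :
    R.ap v⁻¹ b = R.ap w⁻¹ (sRefl α b) := by
  have hinv : (sRefl α)⁻¹ = sRefl α := inv_eq_of_mul_eq_one_right (sRefl_mul_self α)
  simp only [ap, InvMemClass.coe_inv, hvw, mul_inv_rev, hinv, LinearIsometryEquiv.coe_mul,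
    Function.comp_apply]

theorem eq_sRefl_mul_symm {α : EV n} {v w : R.Weyl}
    (hvw : (v : EV n ≃ₗᵢ[ℝ] EV n) = sRefl α * (w : EV n ≃ₗᵢ[ℝ] EV n)) :
    (w : EV n ≃ₗᵢ[ℝ] EV n) = sRefl α * (v : EV n ≃ₗᵢ[ℝ] EV n) := by
  rw [hvw, ← mul_assoc, sRefl_mul_self, one_mul]

theorem ap_inv_mem_pos_of_notMem_N {u : R.Weyl} {b : EV n} (hb : b ∈ R.pos) (hbu : b ∉ R.N u) :
    R.ap u⁻¹ b ∈ R.pos :=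
  R.mem_pos_of_notMem_neg_pos (R.ap_mem_Φ _ (R.pos_sub hb)) fun h => hbu ⟨hb, h⟩

theorem len_le_lenh_add_ncard_pos_diff (h : Set (EV n)) (u : R.Weyl) :
    R.len u ≤ R.lenh h u + (R.pos \ h).ncard := by
  have hfin : (R.N u).Finite := R.pos_finite.subset fun _ hb => hb.1
  have hdiff : (R.N u \ R.Nh h u).ncard ≤ (R.pos \ h).ncard := by
    refine Set.ncard_le_ncard_of_injOn (fun b => -R.ap u⁻¹ b) ?_ ?_ R.pos_finite.sdiff
    · exact fun b ⟨hbu, hbh⟩ => ⟨hbu.2, fun hb => hbh ⟨hbu.1, hb⟩⟩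
    · exact fun x _ y _ hxy => (u⁻¹ : R.Weyl).1.injective (neg_injective hxy)
  have hinter : (R.N u ∩ R.Nh h u).ncard ≤ R.lenh h u :=
    Set.ncard_le_ncard Set.inter_subset_right (R.pos_finite.subset fun _ hb => hb.1)
  have := Set.ncard_inter_add_ncard_sdiff_eq_ncard (R.N u) (R.Nh h u) hfin
  unfold len
  omega

def basisΔ : Module.Basis R.Δ ℝ (EV n) :=
  Module.Basis.mk R.Δ_indep (by rw [Subtype.range_coe, R.Δ_span])

theorem basisΔ_repr_nonneg {x : EV n} (hx : x ∈ AddSubmonoid.closure R.pos) (d : R.Δ) :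
    0 ≤ R.basisΔ.repr x d := by
  suffices ∀ y ∈ AddSubmonoid.closure R.Δ, 0 ≤ R.basisΔ.repr y d from
    this x (AddSubmonoid.closure_le.2 R.pos_combo hx)
  intro y hy
  induction hy using AddSubmonoid.closure_induction with
  | mem y hy =>
    have hyb : R.basisΔ ⟨y, hy⟩ = y := Module.Basis.mk_apply _ _ _
    rw [← hyb, Module.Basis.repr_self, Finsupp.single_apply]
    split_ifs <;> norm_num
  | zero => simp
  | add y z _ _ ihy ihz =>
    rw [map_add, Finsupp.add_apply]
    exact add_nonneg ihy ihz

theorem eq_zero_of_mem_closure_pos_of_neg_mem {x : EV n} (hx : x ∈ AddSubmonoid.closure R.pos)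
    (hnx : -x ∈ AddSubmonoid.closure R.pos) : x = 0 :=
  R.basisΔ.ext_elem fun d => by
    have h₁ := R.basisΔ_repr_nonneg hx d
    have h₂ := R.basisΔ_repr_nonneg hnx d
    simp only [map_neg, Finsupp.neg_apply, map_zero, Finsupp.coe_zero, Pi.zero_apply] at h₂ ⊢
    linarith

theorem add_ne_neg_nsmul {x y z : EV n} (hx : x ∈ R.pos) (hy : y ∈ R.pos) (hz : z ∈ R.pos)
    (m : ℕ) : x + y ≠ -(m • z) := by
  intro hxy
  have hsum : x + y ∈ AddSubmonoid.closure R.pos :=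
    add_mem (AddSubmonoid.subset_closure hx) (AddSubmonoid.subset_closure hy)
  have hneg : -(x + y) ∈ AddSubmonoid.closure R.pos := by
    rw [hxy, neg_neg]
    exact nsmul_mem (AddSubmonoid.subset_closure hz) m
  have hx' := eq_neg_of_add_eq_zero_left (R.eq_zero_of_mem_closure_pos_of_neg_mem hsum hneg)
  exact R.notMem_neg_pos hx (by rwa [hx', Set.mem_neg, neg_neg])

theorem exists_add_neg_sRefl_eq_nsmul {α b : EV n} (hα : α ∈ R.pos) (hb : b ∈ R.pos)
    (hαb : sRefl α b ∈ -R.pos) : ∃ m : ℕ, m ≠ 0 ∧ b + -sRefl α b = m • α := by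
  obtain ⟨k, hk⟩ := R.cartan_int α (R.pos_sub hα) b (R.pos_sub hb)
  have hsum : b + -sRefl α b = (k : ℝ) • α := by rw [sRefl_apply, ← hk]; abel
  obtain ⟨m, rfl | rfl⟩ := Int.eq_nat_or_neg k
  · refine ⟨m, ?_, by rw [hsum, Int.cast_natCast, Nat.cast_smul_eq_nsmul]⟩
    rintro rfl
    exact R.add_ne_neg_nsmul hb hαb hα 0 (by simpa using hsum)
  · refine absurd ?_ (R.add_ne_neg_nsmul hb hαb hα m)
    rw [hsum, Int.cast_neg, Int.cast_natCast, neg_smul, Nat.cast_smul_eq_nsmul]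

theorem prec_add_nsmul (a : EV n) {z : EV n} (hz : z ∈ R.pos) {m : ℕ} (hm : m ≠ 0) :
    R.prec a (a + m • z) := by
  refine ⟨fun h => ?_, ?_⟩
  · rw [left_eq_add, ← Nat.cast_smul_eq_nsmul ℝ, smul_eq_zero, Nat.cast_eq_zero] at h
    exact h.elim hm (R.pos_ne_zero hz)
  · rw [add_sub_cancel_left]
    exact nsmul_mem (AddSubmonoid.subset_closure hz) m

variable {R} in
theorem IsHess.mem_of_prec {h : Set (EV n)} (hh : R.IsHess h) {a b : EV n} (ha : a ∈ R.pos)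
    (hb : b ∈ h) (hab : R.prec a b) : a ∈ h := by
  by_contra ha'
  exact (hh.2.2 a ⟨ha, ha'⟩ b (hh.1 hb) hab).2 hb

/-- The inversion set `N_{s_α}`. -/
def NRefl (α : EV n) : Set (EV n) := {b | b ∈ R.pos ∧ sRefl α b ∈ -R.pos}

theorem mem_NRefl_self {α : EV n} (hα : α ∈ R.pos) : α ∈ R.NRefl α :=
  ⟨hα, by rw [sRefl_self, Set.mem_neg, neg_neg]; exact hα⟩

theorem neg_sRefl_mem_NRefl {α b : EV n} (hb : b ∈ R.NRefl α) : -sRefl α b ∈ R.NRefl α :=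
  ⟨hb.2, by rw [map_neg, sRefl_involutive α b, Set.mem_neg, neg_neg]; exact hb.1⟩

theorem NRefl_finite (α : EV n) : (R.NRefl α).Finite := R.pos_finite.subset fun _ hb => hb.1

section Reflected

variable {R} {α : EV n} {v w : R.Weyl}

theorem ncard_sep_sdiff_NRefl_eq (T : Set (EV n)) (hα : α ∈ R.Φ)
    (hvw : (v : EV n ≃ₗᵢ[ℝ] EV n) = sRefl α * (w : EV n ≃ₗᵢ[ℝ] EV n)) :
    ({b | b ∈ R.pos ∧ R.ap v⁻¹ b ∈ T} \ R.NRefl α).ncard =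
      ({b | b ∈ R.pos ∧ R.ap w⁻¹ b ∈ T} \ R.NRefl α).ncard := by
  have hpre : {b | b ∈ R.pos ∧ R.ap v⁻¹ b ∈ T} \ R.NRefl α =
      sRefl α ⁻¹' ({b | b ∈ R.pos ∧ R.ap w⁻¹ b ∈ T} \ R.NRefl α) := by
    ext b
    simp only [NRefl, Set.mem_sdiff, Set.mem_ofPred_eq, Set.mem_preimage,
      R.ap_inv_of_eq_sRefl_mul hvw, sRefl_involutive α b, not_and]
    constructor
    · rintro ⟨⟨hb, hT⟩, hbA⟩
      have hbΦ := R.reflect_mem α hα b (R.pos_sub hb)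
      exact ⟨⟨R.mem_pos_of_notMem_neg_pos hbΦ (hbA hb), hT⟩, fun _ => R.notMem_neg_pos hb⟩
    · rintro ⟨⟨hb, hT⟩, hbA⟩
      have hbΦ := R.reflect_mem α hα _ (R.pos_sub hb)
      rw [sRefl_involutive α b] at hbΦ
      exact ⟨⟨R.mem_pos_of_notMem_neg_pos hbΦ (hbA hb), hT⟩, fun _ => R.notMem_neg_pos hb⟩
  rw [hpre, Set.ncard_preimage_of_injective_subset_range (sRefl α).injective
    (by rw [(sRefl α).surjective.range_eq]; exact Set.subset_univ _)]

theorem N_inter_NRefl_eq_preimage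
    (hvw : (v : EV n ≃ₗᵢ[ℝ] EV n) = sRefl α * (w : EV n ≃ₗᵢ[ℝ] EV n)) :
    R.N v ∩ R.NRefl α = (fun b => -sRefl α b) ⁻¹' (R.NRefl α \ R.N w) := by
  ext b
  simp only [N, NRefl, Set.mem_inter_iff, Set.mem_sdiff, Set.mem_ofPred_eq, Set.mem_preimage,
    R.ap_inv_of_eq_sRefl_mul hvw, map_neg, sRefl_involutive α b, R.ap_neg, not_and,
    Set.mem_neg, neg_neg]
  constructor
  · rintro ⟨⟨hb, hbv⟩, -, hbA⟩
    exact ⟨⟨hbA, hb⟩, fun _ hbw => R.notMem_neg_pos hbw hbv⟩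
  · rintro ⟨⟨hbA, hb⟩, hbw⟩
    have hΦ := R.ap_mem_Φ w⁻¹ (R.pos_sub hbA)
    rw [R.ap_neg] at hΦ
    refine ⟨⟨hb, R.mem_pos_of_notMem_neg_pos hΦ ?_⟩, hb, hbA⟩
    rw [Set.mem_neg, neg_neg]
    exact hbw hbA

theorem len_add_ncard_NRefl_inter_N (hα : α ∈ R.Φ)
    (hvw : (v : EV n ≃ₗᵢ[ℝ] EV n) = sRefl α * (w : EV n ≃ₗᵢ[ℝ] EV n)) :
    R.len v + (R.NRefl α ∩ R.N w).ncard = R.len w + (R.NRefl α \ R.N w).ncard := by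
  have hfin : ∀ u : R.Weyl, (R.N u).Finite := fun u => R.pos_finite.subset fun _ hb => hb.1
  have hinter : (R.N v ∩ R.NRefl α).ncard = (R.NRefl α \ R.N w).ncard := by
    rw [N_inter_NRefl_eq_preimage hvw, Set.ncard_preimage_of_injective_subset_range
      (neg_sRefl_involutive α).injective (by simp [(neg_sRefl_involutive α).surjective.range_eq])]
  have hdiff := ncard_sep_sdiff_NRefl_eq (-R.pos) hα hvw
  have hv := Set.ncard_inter_add_ncard_sdiff_eq_ncard (R.N v) (R.NRefl α) (hfin v)
  have hw := Set.ncard_inter_add_ncard_sdiff_eq_ncard (R.N w) (R.NRefl α) (hfin w)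
  rw [Set.inter_comm] at hw
  unfold len
  change (R.N v \ R.NRefl α).ncard = (R.N w \ R.NRefl α).ncard at hdiff
  omega

theorem neg_sRefl_notMem_N {u : R.Weyl} (hα : α ∈ R.pos) (hαu : α ∉ R.N u) {b : EV n}
    (hb : b ∈ R.NRefl α) (hbu : b ∈ R.N u) : -sRefl α b ∉ R.N u := by
  intro hσu
  obtain ⟨m, -, hm⟩ := R.exists_add_neg_sRefl_eq_nsmul hα hb.1 hb.2
  refine R.add_ne_neg_nsmul hbu.2 hσu.2 (R.ap_inv_mem_pos_of_notMem_N hα hαu) m ?_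
  rw [← neg_add, ← R.ap_add, hm, R.ap_nsmul]

theorem image_neg_sRefl_NRefl_inter_N_subset {u : R.Weyl} (hα : α ∈ R.pos)
    (hαu : α ∉ R.N u) :
    (fun b => -sRefl α b) '' (R.NRefl α ∩ R.N u) ⊆ (R.NRefl α \ R.N u) \ {α} := by
  rintro _ ⟨b, ⟨hb, hbu⟩, rfl⟩
  refine ⟨⟨R.neg_sRefl_mem_NRefl hb, neg_sRefl_notMem_N hα hαu hb hbu⟩, fun hσb => hαu ?_⟩
  have hbα : b = α := by
    rw [← neg_sRefl_involutive α b, Set.mem_singleton_iff.1 hσb]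
    simp only [sRefl_self, neg_neg]
  exact hbα ▸ hbu

theorem ncard_NRefl_inter_N_lt {u : R.Weyl} (hα : α ∈ R.pos) (hαu : α ∉ R.N u) :
    (R.NRefl α ∩ R.N u).ncard < (R.NRefl α \ R.N u).ncard := by
  rw [← Set.ncard_image_of_injective _ (neg_sRefl_involutive α).injective]
  refine Set.ncard_lt_ncard ?_ (R.NRefl_finite α).sdiff
  exact (image_neg_sRefl_NRefl_inter_N_subset hα hαu).trans_ssubset
    (Set.sdiff_singleton_ssubset.2 ⟨R.mem_NRefl_self hα, hαu⟩)

theorem notMem_N_of_cover (hα : α ∈ R.pos)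
    (hvw : (v : EV n ≃ₗᵢ[ℝ] EV n) = sRefl α * (w : EV n ≃ₗᵢ[ℝ] EV n))
    (hlen : R.len v = R.len w + 1) : α ∉ R.N w := by
  intro hαw
  have hαv : α ∉ R.N v := fun hαv => by
    have := hαv.2
    rw [R.ap_inv_of_eq_sRefl_mul hvw, sRefl_self, R.ap_neg, Set.mem_neg, neg_neg] at this
    exact R.notMem_neg_pos this hαw.2
  have hcount := len_add_ncard_NRefl_inter_N (R.pos_sub hα) (R.eq_sRefl_mul_symm hvw)
  have hlt := ncard_NRefl_inter_N_lt hα hαv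
  omega

theorem neg_sRefl_mem_N_of_cover (hα : α ∈ R.pos)
    (hvw : (v : EV n ≃ₗᵢ[ℝ] EV n) = sRefl α * (w : EV n ≃ₗᵢ[ℝ] EV n))
    (hlen : R.len v = R.len w + 1) {b : EV n} (hb : b ∈ R.NRefl α) (hbα : b ≠ α)
    (hbw : b ∉ R.N w) : -sRefl α b ∈ R.N w := by
  have hαw := notMem_N_of_cover hα hvw hlen
  have hcount := len_add_ncard_NRefl_inter_N (R.pos_sub hα) hvw
  have hαA : α ∈ R.NRefl α \ R.N w := ⟨R.mem_NRefl_self hα, hαw⟩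
  have himage : (fun b => -sRefl α b) '' (R.NRefl α ∩ R.N w) = (R.NRefl α \ R.N w) \ {α} := by
    refine Set.eq_of_subset_of_ncard_le (image_neg_sRefl_NRefl_inter_N_subset hα hαw) ?_
      (R.NRefl_finite α).sdiff.sdiff
    rw [Set.ncard_image_of_injective _ (neg_sRefl_involutive α).injective,
      Set.ncard_sdiff_singleton_of_mem hαA]
    omega
  obtain ⟨c, hc, rfl⟩ := himage.ge ⟨⟨hb, hbw⟩, hbα⟩
  simpa only [neg_sRefl_involutive α c] using hc.2

theorem Nh_inter_NRefl_subset_of_cover {h : Set (EV n)} (hh : R.IsHess h) (hα : α ∈ R.pos)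
    (hvw : (v : EV n ≃ₗᵢ[ℝ] EV n) = sRefl α * (w : EV n ≃ₗᵢ[ℝ] EV n))
    (hlen : R.len v = R.len w + 1) :
    R.Nh h v ∩ R.NRefl α ⊆ insert α (R.Nh h w ∩ R.NRefl α) := by
  rintro b ⟨⟨hb, hbv⟩, hbA⟩
  rcases eq_or_ne b α with rfl | hbα
  · exact Set.mem_insert _ _
  refine Set.mem_insert_of_mem _ ⟨⟨hb, ?_⟩, hbA⟩
  have hμ : R.ap w⁻¹ (-sRefl α b) ∈ h := by
    rwa [R.ap_inv_of_eq_sRefl_mul hvw, Set.mem_neg, ← R.ap_neg] at hbv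
  have hbw : b ∈ R.N w := by
    by_contra hbw
    exact R.notMem_neg_pos (hh.1 hμ) (neg_sRefl_mem_N_of_cover hα hvw hlen hbA hbα hbw).2
  obtain ⟨m, hm, hsum⟩ := R.exists_add_neg_sRefl_eq_nsmul hα hb hbA.2
  have hμ_eq : R.ap w⁻¹ (-sRefl α b) = -R.ap w⁻¹ b + m • R.ap w⁻¹ α := by
    rw [← R.ap_nsmul, ← hsum, R.ap_add]
    abel
  have hwα := R.ap_inv_mem_pos_of_notMem_N hα (notMem_N_of_cover hα hvw hlen)
  exact hh.mem_of_prec hbw.2 hμ (hμ_eq ▸ R.prec_add_nsmul _ hwα hm)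

theorem lenh_le_lenh_add_one_of_cover {h : Set (EV n)} (hh : R.IsHess h) (hα : α ∈ R.pos)
    (hvw : (v : EV n ≃ₗᵢ[ℝ] EV n) = sRefl α * (w : EV n ≃ₗᵢ[ℝ] EV n))
    (hlen : R.len v = R.len w + 1) : R.lenh h v ≤ R.lenh h w + 1 := by
  have hfin : ∀ u : R.Weyl, (R.Nh h u).Finite := fun u => R.pos_finite.subset fun _ hb => hb.1
  have hinter : (R.Nh h v ∩ R.NRefl α).ncard ≤ (R.Nh h w ∩ R.NRefl α).ncard + 1 :=
    (Set.ncard_le_ncard (Nh_inter_NRefl_subset_of_cover hh hα hvw hlen)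
      (((hfin w).inter_of_left _).insert α)).trans (Set.ncard_insert_le _ _)
  have hdiff : (R.Nh h v \ R.NRefl α).ncard = (R.Nh h w \ R.NRefl α).ncard :=
    ncard_sep_sdiff_NRefl_eq (-h) (R.pos_sub hα) hvw
  have hv := Set.ncard_inter_add_ncard_sdiff_eq_ncard (R.Nh h v) (R.NRefl α) (hfin v)
  have hw := Set.ncard_inter_add_ncard_sdiff_eq_ncard (R.Nh h w) (R.NRefl α) (hfin w)
  unfold lenh
  omega

end Reflected

end BasedRootSystem

open BasedRootSystem in
/-- If `v` covers `w`, then `|N_v| - |Φ⁺ \ 𝔥| ≤ |N_v^𝔥| ≤ |N_w^𝔥| + 1`. -/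
theorem lenh_cover_bounds {n : ℕ} (R : BasedRootSystem n) (h : Set (EV n))
    (hh : R.IsHess h) (v w : R.Weyl) (hcov : R.Covers v w) :
    R.len v - (R.pos \ h).ncard ≤ R.lenh h v ∧ R.lenh h v ≤ R.lenh h w + 1 := by
  obtain ⟨α, hα, hvw, hlen⟩ := hcov
  exact ⟨tsub_le_iff_right.2 (R.len_le_lenh_add_ncard_pos_diff h v),
    lenh_le_lenh_add_one_of_cover hh hα hvw hlen⟩
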